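/- arXiv:2605.01747 — 2 statements merged into one kernel-verified Lean document; each statement's English description precedes it below -/
import Mathlib

section
/- Define S_1(n) = sum over all integers k of q^{3k^2 - k - 3kn} * [n choose 3k-n]_q and S_3(n) = sum over all integers k of q^{3k^2 - k - 3kn} * [n choose 3k-1-n]_q, with the convention that [n choose r]_q = 0 if r < 0 or r > n. Then S_1(n) - S_3(n) = (-1)^n * q^{-C(n+1,2)} for every nonnegative integer n. -/
/-- Gaussian binomial coefficient `[n choose r]_q`, defined via the q-Pascal
recurrence, with the convention that it is `0` when `r < 0` or `r > n`. -/
def qbinom {K : Type*} [CommRing K] (q : K) : ℕ → ℤ → K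
  | 0, r => if r = 0 then 1 else 0
  | n + 1, r => q ^ r.toNat * qbinom q n r + qbinom q n (r - 1)

/-!
Write `T_j(n)` for the sum with `[n choose 3k - j - n]_q`, so that the claim is about
`T_0 - T_1`. The two q-Pascal rules `[n+1, r] = q^r [n, r] + [n, r-1]` and
`[n+1, r] = [n, r] + q^(n+1-r) [n, r-1]`, applied to `T_0(n+1)` and `T_1(n+1)` respectively, give
`T_0(n+1) = q^(-(n+1)) T_1(n) + R(n)` and `T_1(n+1) = R(n) + q^(-(n+1)) T_0(n)`
with the same cross term `R(n)` (for `T_1` after the shift `k ↦ k - 1`). Hence `T_0 - T_1` gets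
multiplied by `-q^(-(n+1))` at each step, and it starts at `1` for `n = 0`.
-/

section QBinom

variable {K : Type*}

theorem qbinom_eq_zero_of_neg [CommRing K] (q : K) :
    ∀ (n : ℕ) {r : ℤ}, r < 0 → qbinom q n r = 0
  | 0, r, hr => by simp [qbinom, hr.ne]
  | n + 1, r, hr => by
    rw [qbinom, qbinom_eq_zero_of_neg q n hr, qbinom_eq_zero_of_neg q n (by omega : r - 1 < 0)]
    ring

theorem qbinom_eq_zero_of_lt [CommRing K] (q : K) :
    ∀ (n : ℕ) {r : ℤ}, (n : ℤ) < r → qbinom q n r = 0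
  | 0, r, hr => by simp [qbinom]; omega
  | n + 1, r, hr => by
    rw [qbinom, qbinom_eq_zero_of_lt q n (by omega : (n : ℤ) < r),
      qbinom_eq_zero_of_lt q n (by omega : (n : ℤ) < r - 1)]
    ring

theorem support_qbinom_subset [CommRing K] (q : K) (n : ℕ) :
    Function.support (qbinom q n) ⊆ Set.Icc 0 (n : ℤ) := fun _ hr =>
  ⟨not_lt.1 fun h => hr (qbinom_eq_zero_of_neg q n h),
    not_lt.1 fun h => hr (qbinom_eq_zero_of_lt q n h)⟩

theorem hasFiniteSupport_qbinom [CommRing K] (q : K) (n : ℕ) :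
    (qbinom q n).HasFiniteSupport :=
  (Set.finite_Icc 0 (n : ℤ)).subset (support_qbinom_subset q n)

variable [Field K] {q : K}

theorem qbinom_succ_zpow (n : ℕ) (r : ℤ) :
    qbinom q (n + 1) r = q ^ r * qbinom q n r + qbinom q n (r - 1) := by
  rcases le_or_gt 0 r with h | h
  · rw [qbinom, ← zpow_natCast, Int.toNat_of_nonneg h]
  · rw [qbinom, qbinom_eq_zero_of_neg q n h, mul_zero, mul_zero]

theorem qbinom_succ_zpow' (hq : q ≠ 0) : ∀ (n : ℕ) (r : ℤ),
    qbinom q (n + 1) r = qbinom q n r + q ^ ((n : ℤ) + 1 - r) * qbinom q n (r - 1)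
  | 0, r => by
    by_cases h0 : r = 0
    · subst h0; simp [qbinom]
    · by_cases h1 : r = 1
      · subst h1; simp [qbinom]
      · simp [qbinom, h0, h1, sub_eq_zero]
  | n + 1, r => by
    -- expand both sides to level `n` with the first rule and the induction hypothesis
    have h1 : q ^ r * q ^ ((n : ℤ) + 1 - r) = q ^ ((n : ℤ) + 1) := by
      rw [← zpow_add₀ hq]; ring_nf
    have h2 : q ^ ((n : ℤ) + 1 + 1 - r) * q ^ (r - 1) = q ^ ((n : ℤ) + 1) := by
      rw [← zpow_add₀ hq]; ring_nf
    have h3 : q ^ ((n : ℤ) + 1 - (r - 1)) = q ^ ((n : ℤ) + 1 + 1 - r) := by ring_nf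
    have e1 := qbinom_succ_zpow (q := q) (n + 1) r
    have e2 := qbinom_succ_zpow' hq n r
    have e3 := qbinom_succ_zpow' hq n (r - 1)
    have e4 := qbinom_succ_zpow (q := q) n r
    have e5 := qbinom_succ_zpow (q := q) n (r - 1)
    push_cast at e1 e2 e3 e4 e5 ⊢
    linear_combination e1 + q ^ r * e2 - e4 + e3 - q ^ ((n : ℤ) + 1 + 1 - r) * e5 +
      qbinom q n (r - 1) * h1 - qbinom q n (r - 1) * h2 + qbinom q n (r - 1 - 1) * h3

end QBinom

section SliceSums

variable {K : Type*} [Field K] {q : K}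

/-- The summand of `T_j(n)`. -/
def sliceTerm (q : K) (n : ℕ) (j k : ℤ) : K :=
  q ^ (3 * k ^ 2 - k - 3 * k * n) * qbinom q n (3 * k - j - n)

/-- The summand of the cross term `R(n)`. -/
def crossTerm (q : K) (n : ℕ) (k : ℤ) : K :=
  q ^ (3 * k ^ 2 - 4 * k - 3 * k * n) * qbinom q n (3 * k - 2 - n)

@[fun_prop]
theorem hasFiniteSupport_sliceTerm (q : K) (n : ℕ) (j : ℤ) :
    (sliceTerm q n j).HasFiniteSupport :=
  .fun_mul_right _ <| (hasFiniteSupport_qbinom q n).fun_comp_of_injective fun _ _ h => by omega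

@[fun_prop]
theorem hasFiniteSupport_crossTerm (q : K) (n : ℕ) :
    (crossTerm q n).HasFiniteSupport :=
  .fun_mul_right _ <| (hasFiniteSupport_qbinom q n).fun_comp_of_injective fun _ _ h => by omega

theorem sliceTerm_succ_zero (hq : q ≠ 0) (n : ℕ) (k : ℤ) :
    sliceTerm q (n + 1) 0 k = q ^ (-((n : ℤ) + 1)) * sliceTerm q n 1 k + crossTerm q n k := by
  have hr : 3 * k - 0 - ((n + 1 : ℕ) : ℤ) = 3 * k - 1 - n := by push_cast; ring
  have e1 : q ^ (3 * k ^ 2 - k - 3 * k * ((n + 1 : ℕ) : ℤ)) * q ^ (3 * k - 1 - (n : ℤ)) =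
      q ^ (-((n : ℤ) + 1)) * q ^ (3 * k ^ 2 - k - 3 * k * n) := by
    rw [← zpow_add₀ hq, ← zpow_add₀ hq]; push_cast; ring_nf
  have e2 : q ^ (3 * k ^ 2 - k - 3 * k * ((n + 1 : ℕ) : ℤ)) =
      q ^ (3 * k ^ 2 - 4 * k - 3 * k * n) := by push_cast; ring_nf
  rw [sliceTerm, sliceTerm, crossTerm, hr, qbinom_succ_zpow,
    show 3 * k - 1 - n - 1 = 3 * k - 2 - (n : ℤ) by ring]
  linear_combination qbinom q n (3 * k - 1 - n) * e1 + qbinom q n (3 * k - 2 - n) * e2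

theorem sliceTerm_succ_one (hq : q ≠ 0) (n : ℕ) (k : ℤ) :
    sliceTerm q (n + 1) 1 k =
      crossTerm q n k + q ^ (-((n : ℤ) + 1)) * sliceTerm q n 0 (k - 1) := by
  have hr : 3 * k - 1 - ((n + 1 : ℕ) : ℤ) = 3 * k - 2 - n := by push_cast; ring
  have hr' : 3 * k - 2 - n - 1 = 3 * (k - 1) - 0 - (n : ℤ) := by ring
  have e1 : q ^ (3 * k ^ 2 - k - 3 * k * ((n + 1 : ℕ) : ℤ)) =
      q ^ (3 * k ^ 2 - 4 * k - 3 * k * n) := by push_cast; ring_nf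
  have e2 : q ^ (3 * k ^ 2 - k - 3 * k * ((n + 1 : ℕ) : ℤ)) * q ^ ((n : ℤ) + 1 - (3 * k - 2 - n)) =
      q ^ (-((n : ℤ) + 1)) * q ^ (3 * (k - 1) ^ 2 - (k - 1) - 3 * (k - 1) * n) := by
    rw [← zpow_add₀ hq, ← zpow_add₀ hq]; push_cast; ring_nf
  rw [sliceTerm, sliceTerm, crossTerm, hr, qbinom_succ_zpow' hq, hr']
  linear_combination qbinom q n (3 * k - 2 - n) * e1 + qbinom q n (3 * (k - 1) - 0 - n) * e2

theorem finsum_sliceTerm_succ_zero (hq : q ≠ 0) (n : ℕ) :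
    ∑ᶠ k, sliceTerm q (n + 1) 0 k =
      q ^ (-((n : ℤ) + 1)) * ∑ᶠ k, sliceTerm q n 1 k + ∑ᶠ k, crossTerm q n k := by
  rw [finsum_congr (sliceTerm_succ_zero hq n), finsum_add_distrib, mul_finsum] <;> fun_prop

theorem finsum_sliceTerm_succ_one (hq : q ≠ 0) (n : ℕ) :
    ∑ᶠ k, sliceTerm q (n + 1) 1 k =
      ∑ᶠ k, crossTerm q n k + q ^ (-((n : ℤ) + 1)) * ∑ᶠ k, sliceTerm q n 0 k := by
  have hshift : ∑ᶠ k, sliceTerm q n 0 (k - 1) = ∑ᶠ k, sliceTerm q n 0 k :=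
    finsum_comp_equiv (Equiv.subRight 1)
  have hfin : Function.HasFiniteSupport fun k => sliceTerm q n 0 (k - 1) :=
    (hasFiniteSupport_sliceTerm q n 0).fun_comp_of_injective sub_left_injective
  rw [finsum_congr (sliceTerm_succ_one hq n), finsum_add_distrib, ← mul_finsum, hshift] <;>
    fun_prop

theorem finsum_sliceTerm_sub_zero_one (hq : q ≠ 0) (n : ℕ) :
    ∑ᶠ k, sliceTerm q n 0 k - ∑ᶠ k, sliceTerm q n 1 k =
      (-1) ^ n * q ^ (-((n + 1).choose 2 : ℤ)) := by
  induction n with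
  | zero =>
    have h0 : ∑ᶠ k, sliceTerm q 0 0 k = 1 := by
      rw [finsum_eq_single _ 0 fun k hk => by simp [sliceTerm, qbinom]; omega]
      simp [sliceTerm, qbinom]
    have h1 : ∑ᶠ k, sliceTerm q 0 1 k = 0 :=
      finsum_eq_zero_of_forall_eq_zero fun k => by simp [sliceTerm, qbinom]; omega
    simp [h0, h1]
  | succ n ih =>
    have hchoose : -((n + 1 + 1).choose 2 : ℤ) = -((n : ℤ) + 1) + -((n + 1).choose 2 : ℤ) := by
      rw [Nat.choose_succ_succ, Nat.choose_one_right]; push_cast; ring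
    rw [finsum_sliceTerm_succ_zero hq, finsum_sliceTerm_succ_one hq, hchoose, zpow_add₀ hq,
      pow_succ]
    linear_combination -q ^ (-((n : ℤ) + 1)) * ih

end SliceSums

theorem stmt_3 {K : Type*} [Field K] (q : K) (hq : q ≠ 0) (n : ℕ) :
    (∑ᶠ k : ℤ, q ^ (3 * k ^ 2 - k - 3 * k * n) * qbinom q n (3 * k - n)) -
      (∑ᶠ k : ℤ, q ^ (3 * k ^ 2 - k - 3 * k * n) * qbinom q n (3 * k - 1 - n)) =
      (-1 : K) ^ n * q ^ (-((n + 1).choose 2 : ℤ)) := by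
  simpa [sliceTerm] using finsum_sliceTerm_sub_zero_one hq n
end

section
/- Let p and q be indeterminates, omega a primitive cube root of unity, and define g(k,n) = 3n - k if k ≡ 2 (mod 3) and g(k,n) = k otherwise. Then for every nonnegative integer m and every z, the sum over n from 0 to 3m of q^{C(n+1,2)} * p^{C(n,2)} * z^n * [3m choose n]_p * (sum over k from n to 2n of q^{(1/3)(k^2 - g(k,n)) - k*n} * [n choose k-n]_q * omega^k) equals (z;p)_{3m} = prod_{i=0}^{3m-1}(1 - z p^i). -/
lemma Nat.choose_two_succ (n : ℕ) : (n + 1).choose 2 = n.choose 2 + n := by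
  rw [Nat.choose_succ_succ', Nat.choose_one_right, add_comm]

section qbinom
variable {R : Type*} [CommRing R] (q : R)

lemma qbinom_succ (n : ℕ) (r : ℤ) :
    qbinom q (n + 1) r = q ^ r.toNat * qbinom q n r + qbinom q n (r - 1) := rfl

lemma qbinom_of_neg {n : ℕ} {r : ℤ} (hr : r < 0) : qbinom q n r = 0 := by
  induction n generalizing r with
  | zero => rw [qbinom, if_neg hr.ne]
  | succ n ih => rw [qbinom_succ, ih hr, ih (by omega), mul_zero, add_zero]

lemma qbinom_of_lt {n : ℕ} {r : ℤ} (hr : n < r) : qbinom q n r = 0 := by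
  induction n generalizing r with
  | zero => rw [qbinom, if_neg (by omega)]
  | succ n ih => rw [qbinom_succ, ih (by omega), ih (by omega), mul_zero, add_zero]

lemma qbinom_succ' (n : ℕ) (r : ℤ) :
    qbinom q (n + 1) r = qbinom q n r + q ^ ((n : ℤ) + 1 - r).toNat * qbinom q n (r - 1) := by
  induction n generalizing r with
  | zero =>
    rcases eq_or_ne r 0 with rfl | h0
    · simp [qbinom]
    rcases eq_or_ne r 1 with rfl | h1
    · simp [qbinom]
    simp [qbinom, h0, h1, sub_eq_zero]
  | succ n ih =>
    have key : q ^ r.toNat * q ^ ((n : ℤ) + 1 - r).toNat * qbinom q n (r - 1) =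
        q ^ ((n : ℤ) + 1 + 1 - r).toNat * q ^ (r - 1).toNat * qbinom q n (r - 1) := by
      by_cases hr : 0 ≤ r - 1 ∧ r - 1 ≤ n
      · rw [← pow_add, ← pow_add]; congr 2; omega
      · rcases not_and_or.1 hr with h | h
        · rw [qbinom_of_neg q (by omega), mul_zero, mul_zero]
        · rw [qbinom_of_lt q (by omega), mul_zero, mul_zero]
    conv_lhs => rw [qbinom_succ, ih, ih]
    conv_rhs => rw [qbinom_succ q n r, qbinom_succ q n (r - 1)]
    push_cast
    rw [show (n : ℤ) + 1 - (r - 1) = n + 1 + 1 - r by ring]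
    linear_combination key

lemma qbinom_sub (n : ℕ) (r : ℤ) : qbinom q n (n - r) = qbinom q n r := by
  induction n generalizing r with
  | zero => simp [qbinom]
  | succ n ih =>
    rw [qbinom_succ, qbinom_succ', ← ih r, ← ih (r - 1)]
    push_cast
    rw [show (n : ℤ) - (r - 1) = n + 1 - r by ring, show (n : ℤ) + 1 - r - 1 = n - r by ring]
    ring

theorem sum_range_qbinom_mul_eq_prod (N : ℕ) (x : R) :
    ∑ n ∈ Finset.range (N + 1), q ^ n.choose 2 * x ^ n * qbinom q N n =
      ∏ i ∈ Finset.range N, (1 + x * q ^ i) := by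
  induction N generalizing x with
  | zero => simp [qbinom]
  | succ N ih =>
    have hpascal : ∀ n : ℕ, q ^ n.choose 2 * x ^ n * qbinom q (N + 1) n =
        q ^ n.choose 2 * (x * q) ^ n * qbinom q N n +
          q ^ n.choose 2 * x ^ n * qbinom q N (n - 1) := by
      intro n
      rw [qbinom_succ, Int.toNat_natCast]
      ring
    have hshift : ∀ i : ℕ, q ^ (i + 1).choose 2 * x ^ (i + 1) * qbinom q N ((i + 1 : ℕ) - 1) =
        x * (q ^ i.choose 2 * (x * q) ^ i * qbinom q N i) := by
      intro i
      rw [Nat.choose_two_succ, Nat.cast_succ, add_sub_cancel_right]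
      ring
    have hfirst : ∑ n ∈ Finset.range (N + 2), q ^ n.choose 2 * (x * q) ^ n * qbinom q N n =
        ∏ i ∈ Finset.range N, (1 + x * q * q ^ i) := by
      rw [Finset.sum_range_succ, qbinom_of_lt q (by push_cast; omega), mul_zero, add_zero, ih]
    have hsecond : ∑ n ∈ Finset.range (N + 2), q ^ n.choose 2 * x ^ n * qbinom q N (n - 1) =
        x * ∏ i ∈ Finset.range N, (1 + x * q * q ^ i) := by
      rw [Finset.sum_range_succ', qbinom_of_neg q (by norm_num), mul_zero, add_zero,
        Finset.sum_congr rfl fun i _ => hshift i, ← Finset.mul_sum, ih]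
    rw [Finset.sum_congr rfl fun n _ => hpascal n, Finset.sum_add_distrib, hfirst, hsecond,
      Finset.prod_range_succ']
    simp only [pow_succ', ← mul_assoc, pow_zero, mul_one]
    ring

lemma sum_range_mul_qbinom_eq_zero (n : ℕ) (g : ℕ → R)
    (hg : ∀ j ≤ n, g (n - j) = -g j) (hfix : ∀ j, 2 * j = n → g j = 0) :
    ∑ j ∈ Finset.range (n + 1), g j * qbinom q n j = 0 := by
  refine Finset.sum_involution (fun j _ => n - j) (fun j hj => ?_) (fun j _ hne hj => ?_)
    (fun j hj => ?_) (fun j hj => ?_) <;> simp only [Finset.mem_range] at *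
  · rw [hg j (by omega), Nat.cast_sub (by omega), qbinom_sub]
    ring
  · exact hne (by rw [hfix j (by omega), zero_mul])
  · omega
  · omega

end qbinom

-- The Legendre symbol `(k / 3)`.
def legendreThree (k : ℤ) : ℤ := if k % 3 = 1 then 1 else if k % 3 = 2 then -1 else 0

lemma legendreThree_three_mul_sub (N k : ℤ) : legendreThree (3 * N - k) = -legendreThree k := by
  unfold legendreThree
  split_ifs <;> omega

lemma legendreThree_three_mul (N : ℤ) : legendreThree (3 * N) = 0 := by
  simp [legendreThree]

lemma legendreThree_eq_zero_of_emod_eq_two {k : ℤ} (h : k % 3 = 2) : legendreThree (k + 1) = 0 := by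
  unfold legendreThree
  split_ifs <;> omega

lemma pow_eq_legendreThree {K : Type*} [CommRing K] {ω : K} (hω : ω ^ 2 + ω + 1 = 0) (k : ℕ) :
    ω ^ k = legendreThree (k + 1) + (1 + ω) * legendreThree k := by
  have hω3 : ω ^ 3 = 1 := by linear_combination (ω - 1) * hω
  have hk : ω ^ k = ω ^ (k % 3) := by
    conv_lhs => rw [← Nat.div_add_mod k 3, pow_add, pow_mul, hω3, one_pow, one_mul]
  rcases (by omega : k % 3 = 0 ∨ k % 3 = 1 ∨ k % 3 = 2) with h | h | h <;> rw [hk, h]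
  · simp [legendreThree, (by omega : (k : ℤ) % 3 = 0), (by omega : ((k : ℤ) + 1) % 3 = 1)]
  · simp [legendreThree, (by omega : (k : ℤ) % 3 = 1), (by omega : ((k : ℤ) + 1) % 3 = 2)]
  · simp [legendreThree, (by omega : (k : ℤ) % 3 = 2), (by omega : ((k : ℤ) + 1) % 3 = 0)]
    linear_combination hω

-- The exponent `(k ^ 2 - g(k, n)) / 3 - k n` of the inner sum.
def cubicExp (n k : ℤ) : ℤ := (k ^ 2 - if k % 3 = 2 then 3 * n - k else k) / 3 - k * n

lemma three_mul_cubicExp_of_ne {k : ℤ} (n : ℤ) (h : k % 3 ≠ 2) :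
    3 * cubicExp n k = k ^ 2 - k - 3 * k * n := by
  have hdvd : 3 ∣ k ^ 2 - k := by
    rcases (by omega : k % 3 = 0 ∨ k % 3 = 1) with h | h <;>
      simp [Int.dvd_iff_emod_eq_zero, pow_two, Int.sub_emod, Int.mul_emod, h]
  rw [cubicExp, if_neg h, mul_sub, Int.mul_ediv_cancel' hdvd]
  ring

lemma three_mul_cubicExp_of_eq {k : ℤ} (n : ℤ) (h : k % 3 = 2) :
    3 * cubicExp n k = k ^ 2 + k - 3 * n - 3 * k * n := by
  have hdvd : 3 ∣ k ^ 2 - (3 * n - k) := by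
    simp [Int.dvd_iff_emod_eq_zero, pow_two, Int.sub_emod, Int.mul_emod, h]
  rw [cubicExp, if_pos h, mul_sub, Int.mul_ediv_cancel' hdvd]
  ring

lemma cubicExp_three_mul_add_one_sub {k : ℤ} (N : ℤ) (h : k % 3 ≠ 2) :
    cubicExp N (3 * N + 1 - k) = cubicExp N k := by
  refine mul_left_cancel₀ (three_ne_zero (α := ℤ)) ?_
  rw [three_mul_cubicExp_of_ne N h, three_mul_cubicExp_of_ne N (by omega)]
  ring

lemma add_cubicExp_succ {k : ℤ} (N : ℤ) (h : k % 3 ≠ 2) :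
    k + cubicExp (N + 1) k = cubicExp N k := by
  refine mul_left_cancel₀ (three_ne_zero (α := ℤ)) ?_
  rw [mul_add, three_mul_cubicExp_of_ne (N + 1) h, three_mul_cubicExp_of_ne N h]
  ring

lemma cubicExp_three_mul_sub {k : ℤ} (N : ℤ) (h : k % 3 ≠ 0) :
    cubicExp N (3 * N - k) = cubicExp N k := by
  have h1 : ∀ k : ℤ, k % 3 = 1 → cubicExp N (3 * N - k) = cubicExp N k := fun k h =>
    mul_left_cancel₀ (three_ne_zero (α := ℤ)) (by
      rw [three_mul_cubicExp_of_ne (k := k) N (by omega),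
        three_mul_cubicExp_of_eq (k := 3 * N - k) N (by omega)]
      ring)
  rcases (by omega : k % 3 = 1 ∨ k % 3 = 2) with h | h
  · exact h1 k h
  · rw [← h1 (3 * N - k) (by omega), sub_sub_cancel]

section Field
variable {K : Type*} [Field K] (q : K)

def cubicWeight (N k : ℤ) : K := legendreThree (k + 1) * q ^ cubicExp N k

lemma cubicWeight_three_mul_add_one_sub (N k : ℤ) :
    cubicWeight q N (3 * N + 1 - k) = -cubicWeight q N k := by
  unfold cubicWeight
  rw [show 3 * N + 1 - k + 1 = 3 * (N + 1) - (k + 1) by ring, legendreThree_three_mul_sub]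
  by_cases h : k % 3 = 2
  · simp [legendreThree_eq_zero_of_emod_eq_two h]
  · rw [cubicExp_three_mul_add_one_sub N h]
    push_cast
    ring

lemma zpow_mul_cubicWeight_succ {q : K} (hq : q ≠ 0) (N k : ℤ) :
    q ^ k * cubicWeight q (N + 1) k = cubicWeight q N k := by
  unfold cubicWeight
  by_cases h : k % 3 = 2
  · simp [legendreThree_eq_zero_of_emod_eq_two h]
  · rw [← add_cubicExp_succ N h, zpow_add₀ hq]
    ring

def cubicSum (n : ℕ) : K := ∑ j ∈ Finset.range (n + 1), cubicWeight q n (n + j) * qbinom q n j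

lemma pow_succ_mul_cubicSum_succ {q : K} (hq : q ≠ 0) (n : ℕ) :
    q ^ (n + 1) * cubicSum q (n + 1) = -cubicSum q n := by
  have hsplit : cubicSum q (n + 1) =
      ∑ j ∈ Finset.range (n + 1), cubicWeight q (n + 1) (n + 1 + j) * (q ^ j * qbinom q n j) +
        ∑ j ∈ Finset.range (n + 1), cubicWeight q (n + 1) (n + 1 + (j + 1)) * qbinom q n j := by
    simp only [cubicSum, qbinom_succ, Int.toNat_natCast, mul_add, Finset.sum_add_distrib]
    rw [Finset.sum_range_succ, Finset.sum_range_succ' _ (n + 1),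
      qbinom_of_lt q (by push_cast; omega), qbinom_of_neg q (by norm_num)]
    push_cast
    simp only [mul_zero, add_zero, add_sub_cancel_right]
  have hvanish :
      ∑ j ∈ Finset.range (n + 1), cubicWeight q (n + 1) (n + 1 + (j + 1)) * qbinom q n j = 0 := by
    refine sum_range_mul_qbinom_eq_zero q n _ (fun j hj => ?_) (fun j hj => ?_)
    · rw [← cubicWeight_three_mul_add_one_sub]
      congr 1
      push_cast [hj]
      ring
    · rw [cubicWeight, show (n : ℤ) + 1 + (j + 1) + 1 = 3 * (j + 1) by omega, legendreThree_three_mul]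
      simp
  have hreflect : cubicSum q n =
      -∑ j ∈ Finset.range (n + 1), q ^ (n + 1 + j) * cubicWeight q (n + 1) (n + 1 + j) *
        qbinom q n j := by
    rw [cubicSum, ← Finset.sum_range_reflect, ← Finset.sum_neg_distrib]
    refine Finset.sum_congr rfl fun j hj => ?_
    rw [Finset.mem_range] at hj
    rw [Nat.add_sub_cancel, Nat.cast_sub (by omega), qbinom_sub,
      show (n : ℤ) + (n - j) = 3 * n + 1 - (n + 1 + j) by ring, cubicWeight_three_mul_add_one_sub,
      ← zpow_mul_cubicWeight_succ hq, ← zpow_natCast]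
    push_cast
    ring
  rw [hsplit, hvanish, add_zero, hreflect, Finset.mul_sum, neg_neg]
  refine Finset.sum_congr rfl fun j _ => ?_
  ring

lemma pow_choose_mul_cubicSum {q : K} (hq : q ≠ 0) (n : ℕ) :
    q ^ (n + 1).choose 2 * cubicSum q n = (-1) ^ n := by
  induction n with
  | zero => simp [cubicSum, cubicWeight, legendreThree, cubicExp, qbinom]
  | succ n ih =>
    rw [Nat.choose_two_succ, pow_add, mul_assoc, pow_succ_mul_cubicSum_succ hq, mul_neg, ih,
      pow_succ, mul_neg_one]

lemma sum_Icc_zpow_cubicExp_mul_qbinom {ω : K} (hω : ω ^ 2 + ω + 1 = 0) (n : ℕ) :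
    ∑ k ∈ Finset.Icc n (2 * n), q ^ cubicExp n k * qbinom q n (k - n) * ω ^ k = cubicSum q n := by
  have hcross : ∑ j ∈ Finset.range (n + 1),
      (legendreThree (n + j) * q ^ cubicExp n (n + j) : K) * qbinom q n j = 0 := by
    refine sum_range_mul_qbinom_eq_zero q n _ (fun j hj => ?_) (fun j hj => ?_)
    · rw [Nat.cast_sub hj, show (n : ℤ) + (n - j) = 3 * n - (n + j) by ring,
        legendreThree_three_mul_sub]
      by_cases h : ((n : ℤ) + j) % 3 = 0
      · simp [legendreThree, h]
      · rw [cubicExp_three_mul_sub n h]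
        push_cast
        ring
    · rw [show (n : ℤ) + j = 3 * j by omega, legendreThree_three_mul]
      simp
  have hsplit : ∀ j : ℕ, q ^ cubicExp n (n + j) * qbinom q n j *
      (legendreThree (n + j + 1) + (1 + ω) * legendreThree (n + j) : K) =
        cubicWeight q n (n + j) * qbinom q n j +
          (1 + ω) * ((legendreThree (n + j) * q ^ cubicExp n (n + j) : K) * qbinom q n j) := by
    intro j
    rw [cubicWeight]
    ring
  rw [← Finset.Ico_add_one_right_eq_Icc, Finset.sum_Ico_eq_sum_range,
    show 2 * n + 1 - n = n + 1 by omega]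
  simp only [pow_eq_legendreThree hω, Nat.cast_add, add_sub_cancel_left]
  rw [Finset.sum_congr rfl fun j _ => hsplit j, Finset.sum_add_distrib, ← Finset.mul_sum, hcross,
    mul_zero, add_zero, cubicSum]

end Field

theorem stmt_11_general {K : Type*} [Field K] (p q ω z : K)
    (hq : q ≠ 0) (hω : ω ^ 2 + ω + 1 = 0) (m : ℕ) :
    ∑ n ∈ Finset.range (3 * m + 1),
      q ^ ((n + 1).choose 2) * p ^ (n.choose 2) * z ^ n * qbinom p (3 * m) n *
        ∑ k ∈ Finset.Icc n (2 * n),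
          q ^ ((((k : ℤ) ^ 2 -
                (if (k : ℤ) % 3 = 2 then 3 * (n : ℤ) - k else (k : ℤ))) / 3) -
              (k : ℤ) * n) *
            qbinom q n ((k : ℤ) - n) * ω ^ k =
      ∏ i ∈ Finset.range (3 * m), (1 - z * p ^ i) := by
  have hterm : ∀ n : ℕ, q ^ (n + 1).choose 2 * p ^ n.choose 2 * z ^ n * qbinom p (3 * m) n *
      ∑ k ∈ Finset.Icc n (2 * n), q ^ cubicExp n k * qbinom q n (k - n) * ω ^ k =
        p ^ n.choose 2 * (-z) ^ n * qbinom p (3 * m) n := by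
    intro n
    rw [sum_Icc_zpow_cubicExp_mul_qbinom q hω, neg_pow, ← pow_choose_mul_cubicSum hq n]
    ring
  refine (Finset.sum_congr rfl fun n _ => hterm n).trans ?_
  simp only [sum_range_qbinom_mul_eq_prod, neg_mul, ← sub_eq_add_neg]

theorem stmt_11 {K : Type*} [Field K] (p q ω z : K)
    (hp : p ≠ 0) (hq : q ≠ 0) (hω : ω ^ 2 + ω + 1 = 0) (hω1 : ω ≠ 1) (m : ℕ) :
    ∑ n ∈ Finset.range (3 * m + 1),
      q ^ ((n + 1).choose 2) * p ^ (n.choose 2) * z ^ n * qbinom p (3 * m) n *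
        ∑ k ∈ Finset.Icc n (2 * n),
          q ^ ((((k : ℤ) ^ 2 -
                (if (k : ℤ) % 3 = 2 then 3 * (n : ℤ) - k else (k : ℤ))) / 3) -
              (k : ℤ) * n) *
            qbinom q n ((k : ℤ) - n) * ω ^ k =
      ∏ i ∈ Finset.range (3 * m), (1 - z * p ^ i) :=
  stmt_11_general p q ω z hq hω m
end
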